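/- arXiv:1911.10661 — 3 statements merged into one kernel-verified Lean document; each statement's English description precedes it below -/
import Mathlib

section
/- If e : [0,T) → ℝ is differentiable, satisfies e'(t) ≤ −e(t)² + g(t)e(t) for a nonnegative function g, and e(0) < 0, then e cannot be defined (remain finite) on all of [0,∞); more precisely any solution with e(0) = −a < 0 satisfies e(t) ≤ −a/(1 − a t), hence blows up to −∞ by time 1/a. -/
/-!
Where `e < 0` and `e' ≤ -e² + g e ≤ -e²`, the reciprocal satisfies `(1/e)' = -e'/e² ≥ 1`, so
`1/e(t) ≥ t - 1/a`. As long as `e` stays negative this gives `e(t) ≤ -a/(1 - a t) < 0`; by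
continuity `e` can therefore never reach `0` before time `1/a`, and the bound holds on all of
`[0, 1/a)`.
-/

open Set

theorem monotoneOn_inv_sub_id_of_deriv_le_neg_sq {D : Set ℝ} (hD : Convex ℝ D) {e e' : ℝ → ℝ}
    (hderiv : ∀ t ∈ D, HasDerivAt e (e' t) t) (hneg : ∀ t ∈ D, e t < 0)
    (hineq : ∀ t ∈ D, e' t ≤ -(e t) ^ 2) :
    MonotoneOn (fun t => (e t)⁻¹ - t) D := by
  have hderiv_inv : ∀ t ∈ D, HasDerivAt (fun t => (e t)⁻¹ - t) (-e' t / e t ^ 2 - 1) t :=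
    fun t ht => ((hderiv t ht).inv (hneg t ht).ne).sub (hasDerivAt_id t)
  refine monotoneOn_of_hasDerivWithinAt_nonneg hD
    (fun t ht => (hderiv_inv t ht).continuousAt.continuousWithinAt)
    (fun t ht => (hderiv_inv t (interior_subset ht)).hasDerivWithinAt) fun t ht => ?_
  have hsq : 0 < e t ^ 2 := sq_pos_of_neg (hneg t (interior_subset ht))
  rw [sub_nonneg, le_div_iff₀ hsq]
  linarith [hineq t (interior_subset ht)]

theorem le_neg_div_of_deriv_le_neg_sq {a T : ℝ} {e e' : ℝ → ℝ}
    (hderiv : ∀ t ∈ Ico 0 T, HasDerivAt e (e' t) t) (hneg : ∀ t ∈ Ico 0 T, e t < 0)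
    (hineq : ∀ t ∈ Ico 0 T, e' t ≤ -(e t) ^ 2) (h0 : e 0 = -a) :
    ∀ t ∈ Ico 0 T, e t ≤ -a / (1 - a * t) := by
  intro t ht
  have ha : 0 < a := by linarith [hneg 0 ⟨le_rfl, ht.1.trans_lt ht.2⟩]
  have hmono := monotoneOn_inv_sub_id_of_deriv_le_neg_sq (convex_Ico 0 T) hderiv hneg hineq
    ⟨le_rfl, ht.1.trans_lt ht.2⟩ ht ht.1
  simp only [h0, sub_zero] at hmono
  have hinv_neg : (e t)⁻¹ < 0 := inv_lt_zero.2 (hneg t ht)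
  have hbound : ((-a)⁻¹ + t)⁻¹ = -a / (1 - a * t) := by
    have : (-a)⁻¹ + t = -(1 - a * t) / a := by field_simp; ring
    rw [this, inv_div, div_neg, neg_div]
  rw [← hbound, le_inv_of_neg (hneg t ht) (by linarith)]
  linarith

theorem neg_on_Icc_of_neg_at_first_crossing {f : ℝ → ℝ} {b : ℝ} (hf : ContinuousOn f (Icc 0 b))
    (h0 : f 0 < 0) (hstep : ∀ s ∈ Ioc 0 b, (∀ t ∈ Ico 0 s, f t < 0) → f s < 0) :
    ∀ t ∈ Icc 0 b, f t < 0 := by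
  by_contra! hcross
  obtain ⟨t₁, ht₁, hft₁⟩ := hcross
  set K := Icc 0 t₁ ∩ f ⁻¹' Ici 0
  have hKsub : Icc 0 t₁ ⊆ Icc 0 b := Icc_subset_Icc_right ht₁.2
  have hK : IsCompact K := (isCompact_Icc.of_isClosed_subset
    ((hf.mono hKsub).preimage_isClosed_of_isClosed isClosed_Icc isClosed_Ici)
    inter_subset_left)
  obtain ⟨s, ⟨hs, hfs⟩, hleast⟩ := hK.exists_isLeast ⟨t₁, ⟨ht₁.1, le_rfl⟩, hft₁⟩
  have hs0 : s ≠ 0 := by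
    rintro rfl
    exact (not_le.2 h0) hfs
  have hbelow : ∀ t ∈ Ico 0 s, f t < 0 := fun t ht => by
    by_contra! hft
    exact (not_le.2 ht.2) (hleast ⟨⟨ht.1, ht.2.le.trans hs.2⟩, hft⟩)
  exact (not_le.2 (hstep s ⟨lt_of_le_of_ne hs.1 (Ne.symm hs0), hs.2.trans ht₁.2⟩ hbelow)) hfs

theorem neg_of_deriv_le_neg_sq_on_Ico {a s : ℝ} {e e' : ℝ → ℝ} (hs : 0 < s) (has : a * s < 1)
    (hcont : ContinuousWithinAt e (Ico 0 s) s) (hderiv : ∀ t ∈ Ico 0 s, HasDerivAt e (e' t) t)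
    (hneg : ∀ t ∈ Ico 0 s, e t < 0) (hineq : ∀ t ∈ Ico 0 s, e' t ≤ -(e t) ^ 2)
    (h0 : e 0 = -a) : e s < 0 := by
  have ha : 0 < a := by linarith [hneg 0 ⟨le_rfl, hs⟩]
  have has' : 0 < 1 - a * s := by linarith
  have hmem : s ∈ closure (Ico 0 s) := by
    rw [closure_Ico hs.ne]
    exact right_mem_Icc.2 hs.le
  calc e s ≤ -a / (1 - a * s) :=
        ContinuousWithinAt.closure_le hmem hcont (by fun_prop (disch := exact has'.ne'))
          (le_neg_div_of_deriv_le_neg_sq hderiv hneg hineq h0)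
    _ < 0 := div_neg_of_neg_of_pos (neg_neg_of_pos ha) has'

/-- Finite-time blow-up in the supercritical region: if `e' ≤ -e² + g e` with
`g ≥ 0` and `e 0 = -a < 0`, then `e t ≤ -a / (1 - a t)` for `0 ≤ t < 1/a`,
so `e` blows up to `-∞` by time `1/a`. -/
theorem stmt_1 (a : ℝ) (ha : 0 < a) (e e' g : ℝ → ℝ)
    (hderiv : ∀ t ∈ Set.Ico (0 : ℝ) (1 / a), HasDerivAt e (e' t) t)
    (hineq : ∀ t ∈ Set.Ico (0 : ℝ) (1 / a), e' t ≤ -(e t) ^ 2 + g t * e t)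
    (hg : ∀ t ∈ Set.Ico (0 : ℝ) (1 / a), 0 ≤ g t)
    (h0 : e 0 = -a) :
    ∀ t ∈ Set.Ico (0 : ℝ) (1 / a), e t ≤ -a / (1 - a * t) := by
  have hineq_neg : ∀ t ∈ Ico 0 (1 / a), e t < 0 → e' t ≤ -(e t) ^ 2 := fun t ht het => by
    nlinarith [hineq t ht, mul_nonpos_of_nonneg_of_nonpos (hg t ht) het.le]
  have hneg : ∀ t ∈ Ico 0 (1 / a), e t < 0 := by
    intro t₀ ht₀
    have hsub : Icc 0 t₀ ⊆ Ico 0 (1 / a) := Icc_subset_Ico_right ht₀.2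
    refine neg_on_Icc_of_neg_at_first_crossing
      (fun t ht => (hderiv t (hsub ht)).continuousAt.continuousWithinAt)
      (by linarith) (fun s hs hbelow => ?_) t₀ ⟨ht₀.1, le_rfl⟩
    have hsI : Ico 0 s ⊆ Ico 0 (1 / a) := Ico_subset_Ico_right (hs.2.trans ht₀.2.le)
    exact neg_of_deriv_le_neg_sq_on_Ico hs.1 ((lt_div_iff₀' ha).1 (hs.2.trans_lt ht₀.2))
      (hderiv s (hsub ⟨hs.1.le, hs.2⟩)).continuousAt.continuousWithinAt
      (fun t ht => hderiv t (hsI ht)) hbelow (fun t ht => hineq_neg t (hsI ht) (hbelow t ht)) h0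
  exact le_neg_div_of_deriv_le_neg_sq hderiv hneg (fun t ht => hineq_neg t ht (hneg t ht)) h0
end

section
/- Suppose e : [0,∞) → ℝ is differentiable, satisfies e'(t) ≥ e(t)(c − e(t)) with c > 0, and 0 < a ≤ e(0) ≤ b. Then there exists t* ≥ 0 such that e(t) ≥ c/2 for all t ≥ t*. -/
/-!
Where `0 < e < c` the inequality forces `e' > 0`, so comparison with constant barriers shows that
a lower bound `μ ∈ (0, c)` on `e`, once reached, persists. Between the levels `μ ≤ e 0` and `c/2`
the logistic term `e (c - e)` is at least `μ c / 2`, so `e` stays above the line `μ + (μ c / 4) t`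
until this line reaches `c/2`; from then on `e ≥ c/2` persists.
-/

open Set

theorem strictSubsolution_le_supersolution {F e e' B B' : ℝ → ℝ} {s t : ℝ}
    (he : ∀ x ∈ Icc s t, HasDerivAt e (e' x) x) (heF : ∀ x ∈ Ico s t, F (e x) ≤ e' x)
    (hB : ∀ x, HasDerivAt B (B' x) x) (hBF : ∀ x ∈ Ico s t, B' x < F (B x))
    (hs : B s ≤ e s) : ∀ x ∈ Icc s t, B x ≤ e x := by
  have hfence := image_le_of_deriv_right_lt_deriv_boundary (f := fun x => -e x) (f' := fun x => -e' x)
    (B := fun x => -B x) (B' := fun x => -B' x)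
    (fun x hx => (he x hx).continuousAt.continuousWithinAt.neg)
    (fun x hx => (he x (Ico_subset_Icc_self hx)).hasDerivWithinAt.neg) (neg_le_neg hs)
    (fun x => (hB x).neg) fun x hx hx_eq => by
      have hBx : B x = e x := neg_injective hx_eq.symm
      linarith [heF x hx, hBx ▸ hBF x hx]
  exact fun x hx => neg_le_neg_iff.1 (hfence hx)

section Logistic

variable {c : ℝ} {e e' : ℝ → ℝ}
  (hderiv : ∀ t : ℝ, 0 ≤ t → HasDerivAt e (e' t) t)
  (hineq : ∀ t : ℝ, 0 ≤ t → e t * (c - e t) ≤ e' t)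
include hderiv hineq

theorem logistic_le_of_le {μ s : ℝ} (hμ : 0 < μ) (hμc : μ < c) (hs : 0 ≤ s) (hes : μ ≤ e s)
    (t : ℝ) (hst : s ≤ t) : μ ≤ e t :=
  strictSubsolution_le_supersolution (F := fun y => y * (c - y)) (B := fun _ => μ) (B' := 0)
    (fun x hx => hderiv x (hs.trans hx.1)) (fun x hx => hineq x (hs.trans hx.1))
    (fun _ => hasDerivAt_const _ _)
    (fun _ _ => mul_pos hμ (sub_pos.2 hμc)) hes t ⟨hst, le_rfl⟩

theorem logistic_exists_half_le {μ : ℝ} (hμ : 0 < μ) (hμc : μ ≤ c / 2) (he0 : μ ≤ e 0) :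
    ∃ T, 0 ≤ T ∧ c / 2 ≤ e T := by
  have hc : 0 < c := by linarith
  set δ := μ * c / 4
  have hδ : 0 < δ := by positivity
  set T := (c / 2 - μ) / δ
  have hT : 0 ≤ T := div_nonneg (by linarith) hδ.le
  have hBT : μ + δ * T = c / 2 := by simp only [T]; field_simp; ring
  have hline := strictSubsolution_le_supersolution (F := fun y => y * (c - y))
    (B := fun x => μ + δ * x) (B' := fun _ => δ) (s := 0) (t := T)
    (fun x hx => hderiv x hx.1) (fun x hx => hineq x hx.1)
    (fun x => by simpa using ((hasDerivAt_id x).const_mul δ).const_add μ)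
    (fun x hx => by
      have hBμ : μ ≤ μ + δ * x := le_add_of_nonneg_right (mul_nonneg hδ.le hx.1)
      have hBc : μ + δ * x ≤ c / 2 := hBT ▸ by gcongr; exact hx.2.le
      calc δ < μ * (c / 2) := by simp only [δ]; linarith [mul_pos hμ hc]
        _ ≤ (μ + δ * x) * (c - (μ + δ * x)) :=
          mul_le_mul hBμ (by linarith) (by linarith) (by linarith))
    (by simpa using he0) T ⟨hT, le_rfl⟩
  exact ⟨T, hT, hBT ▸ hline⟩

end Logistic

theorem stmt_2_general (c a : ℝ) (hc : 0 < c) (e e' : ℝ → ℝ)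
    (hderiv : ∀ t : ℝ, 0 ≤ t → HasDerivAt e (e' t) t)
    (hineq : ∀ t : ℝ, 0 ≤ t → e t * (c - e t) ≤ e' t)
    (ha : 0 < a) (h0a : a ≤ e 0) :
    ∃ tstar : ℝ, 0 ≤ tstar ∧ ∀ t : ℝ, tstar ≤ t → c / 2 ≤ e t := by
  obtain ⟨T, hT, heT⟩ := logistic_exists_half_le hderiv hineq (μ := min a (c / 2))
    (lt_min ha (half_pos hc)) (min_le_right _ _) ((min_le_left _ _).trans h0a)
  exact ⟨T, hT, logistic_le_of_le hderiv hineq (half_pos hc) (half_lt_self hc) hT heT⟩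

/-- Quantitative lower bound for the logistic differential inequality:
if `e' ≥ e (c - e)` with `c > 0` and `0 < a ≤ e 0 ≤ b`, then eventually
`e t ≥ c / 2`. -/
theorem stmt_2 (c a b : ℝ) (hc : 0 < c) (e e' : ℝ → ℝ)
    (hderiv : ∀ t : ℝ, 0 ≤ t → HasDerivAt e (e' t) t)
    (hineq : ∀ t : ℝ, 0 ≤ t → e t * (c - e t) ≤ e' t)
    (ha : 0 < a) (h0a : a ≤ e 0) (h0b : e 0 ≤ b) :
    ∃ tstar : ℝ, 0 ≤ tstar ∧ ∀ t : ℝ, tstar ≤ t → c / 2 ≤ e t :=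
  stmt_2_general c a hc e e' hderiv hineq ha h0a
end

section
/- Suppose X, Y : [0,∞) → ℝ are nonnegative differentiable functions satisfying X' ≤ −c₁√ε X + (c₂/√ε) Y + c₃ and Y' ≤ c₄ ε^{3/2} X − c₅ Y + c₆ ε², with all cᵢ > 0, X(0) ≤ C₀, Y(0) ≤ C₀ε². Then for ε sufficiently small there exist constants c₇, c₈ (independent of ε) with X(t) ≤ c₇ ε^{−1/2} and Y(t) ≤ c₈ ε for all t ≥ 0. -/
/-!
The box `X ≤ A / √ε`, `Y ≤ B ε` is forward invariant for suitable `A`, `B`. On the face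
`X = A / √ε` the first inequality gives `X' ≤ -c₁ A + c₂ B √ε + c₃`, which is negative once
`c₁ A ≥ c₃ + 1` and `c₂ B √ε < 1`; on the face `Y = B ε` the second gives
`Y' ≤ ε (c₄ A + c₆ ε - c₅ B)`, which is negative once `c₅ B > c₄ A + c₆`. A solution starting
in the box can therefore never leave it, by real induction on the first exit time.
-/

open Real Filter Set Topology

lemma eventually_nhdsGT_lt_of_hasDerivAt_neg {f : ℝ → ℝ} {f' x : ℝ} (hf : HasDerivAt f f' x)
    (hf' : f' < 0) : ∀ᶠ t in 𝓝[>] x, f t < f x := by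
  filter_upwards [hf.hasDerivWithinAt.limsup_slope_le' (lt_irrefl x) hf', self_mem_nhdsWithin]
    with t hslope hxt
  exact (slope_neg_iff_of_le hxt.le).mp hslope

lemma eventually_nhdsGT_le_of_hasDerivAt {f : ℝ → ℝ} {f' x a : ℝ} (hf : HasDerivAt f f' x)
    (hx : f x ≤ a) (hf' : f x = a → f' < 0) : ∀ᶠ t in 𝓝[>] x, f t ≤ a := by
  rcases hx.eq_or_lt with hxa | hxa
  · filter_upwards [eventually_nhdsGT_lt_of_hasDerivAt_neg hf (hf' hxa)] with t ht
    exact hxa ▸ ht.le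
  · exact eventually_nhdsWithin_of_eventually_nhds
      (hf.continuousAt.eventually (eventually_le_nhds hxa))

theorem le_and_le_of_deriv_neg_boundary {X Y X' Y' : ℝ → ℝ} {t₀ a b : ℝ}
    (hX : ∀ t, t₀ ≤ t → HasDerivAt X (X' t) t) (hY : ∀ t, t₀ ≤ t → HasDerivAt Y (Y' t) t)
    (hX₀ : X t₀ ≤ a) (hY₀ : Y t₀ ≤ b)
    (hXa : ∀ t, t₀ ≤ t → X t = a → Y t ≤ b → X' t < 0)
    (hYb : ∀ t, t₀ ≤ t → Y t = b → X t ≤ a → Y' t < 0) :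
    ∀ t, t₀ ≤ t → X t ≤ a ∧ Y t ≤ b := by
  intro T hT
  have hcont : ∀ {F F' : ℝ → ℝ}, (∀ t, t₀ ≤ t → HasDerivAt F (F' t) t) →
      ContinuousOn F (Icc t₀ T) := fun hF t ht => (hF t ht.1).continuousAt.continuousWithinAt
  have hclosed : IsClosed ({t | X t ≤ a ∧ Y t ≤ b} ∩ Icc t₀ T) := by
    rw [inter_comm]
    exact ((hcont hX).prodMk (hcont hY)).preimage_isClosed_of_isClosed isClosed_Icc
      (isClosed_Iic.prod isClosed_Iic)
  refine hclosed.Icc_subset_of_forall_mem_nhdsWithin ⟨hX₀, hY₀⟩ ?_ ⟨hT, le_rfl⟩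
  rintro t ⟨⟨hXt, hYt⟩, ht, -⟩
  exact (eventually_nhdsGT_le_of_hasDerivAt (hX t ht) hXt (hXa t ht · hYt)).and
    (eventually_nhdsGT_le_of_hasDerivAt (hY t ht) hYt (hYb t ht · hXt))

lemma drift_X_neg_on_face {c₁ c₂ c₃ s A B y : ℝ} (hs : 0 < s) (hc₂ : 0 ≤ c₂)
    (hA : c₃ + 1 ≤ c₁ * A) (hsB : c₂ * B * s < 1) (hy : y ≤ B * s ^ 2) :
    -c₁ * s * (A / s) + c₂ / s * y + c₃ < 0 := by
  have hYterm : c₂ / s * y ≤ c₂ * B * s :=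
    calc c₂ / s * y ≤ c₂ / s * (B * s ^ 2) := by gcongr
      _ = c₂ * B * s := by field_simp
  have hXterm : -c₁ * s * (A / s) = -(c₁ * A) := by field_simp
  linarith

lemma drift_Y_neg_on_face {c₄ c₅ c₆ s A B x : ℝ} (hs : 0 < s) (hs₁ : s ≤ 1) (hc₄ : 0 ≤ c₄)
    (hc₆ : 0 ≤ c₆) (hB : c₄ * A + c₆ < c₅ * B) (hx : x ≤ A / s) :
    c₄ * s ^ 2 * s * x - c₅ * (B * s ^ 2) + c₆ * (s ^ 2) ^ 2 < 0 := by
  have hXterm : c₄ * s ^ 2 * s * x ≤ c₄ * A * s ^ 2 :=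
    calc c₄ * s ^ 2 * s * x ≤ c₄ * s ^ 2 * s * (A / s) := by gcongr
      _ = c₄ * A * s ^ 2 := by field_simp
  have hsource : c₆ * (s ^ 2) ^ 2 ≤ c₆ * s ^ 2 := by
    gcongr
    nlinarith
  nlinarith [pow_pos hs 2]

theorem le_div_and_le_mul_sq_of_diffIneq {c₁ c₂ c₃ c₄ c₅ c₆ s A B : ℝ} {X Y X' Y' : ℝ → ℝ}
    (hc₂ : 0 ≤ c₂) (hc₄ : 0 ≤ c₄) (hc₆ : 0 ≤ c₆) (hs : 0 < s) (hs₁ : s ≤ 1)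
    (hA : c₃ + 1 ≤ c₁ * A) (hB : c₄ * A + c₆ < c₅ * B) (hsB : c₂ * B * s < 1)
    (hX : ∀ t, 0 ≤ t → HasDerivAt X (X' t) t) (hY : ∀ t, 0 ≤ t → HasDerivAt Y (Y' t) t)
    (hX' : ∀ t, 0 ≤ t → X' t ≤ -c₁ * s * X t + c₂ / s * Y t + c₃)
    (hY' : ∀ t, 0 ≤ t → Y' t ≤ c₄ * s ^ 2 * s * X t - c₅ * Y t + c₆ * (s ^ 2) ^ 2)
    (hX₀ : X 0 ≤ A / s) (hY₀ : Y 0 ≤ B * s ^ 2) :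
    ∀ t, 0 ≤ t → X t ≤ A / s ∧ Y t ≤ B * s ^ 2 :=
  le_and_le_of_deriv_neg_boundary hX hY hX₀ hY₀
    (fun t ht hXt hYt => (hX' t ht).trans_lt (hXt ▸ drift_X_neg_on_face hs hc₂ hA hsB hYt))
    (fun t ht hYt hXt => (hY' t ht).trans_lt (hYt ▸ drift_Y_neg_on_face hs hs₁ hc₄ hc₆ hB hXt))

/-- Uniform-in-time bounds for the coupled system of differential inequalities
`X' ≤ -c₁√ε X + (c₂/√ε) Y + c₃`, `Y' ≤ c₄ ε^{3/2} X - c₅ Y + c₆ ε²`,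
with `X(0) ≤ C₀`, `Y(0) ≤ C₀ ε²`: for `ε` small enough,
`X(t) ≤ c₇ ε^{-1/2}` and `Y(t) ≤ c₈ ε` for all `t ≥ 0`, with `c₇, c₈`
independent of `ε`. -/
theorem stmt_9 (c₁ c₂ c₃ c₄ c₅ c₆ C₀ : ℝ)
    (h₁ : 0 < c₁) (h₂ : 0 < c₂) (h₃ : 0 < c₃) (h₄ : 0 < c₄) (h₅ : 0 < c₅)
    (h₆ : 0 < c₆) (hC₀ : 0 < C₀) :
    ∃ c₇ c₈ ε₀ : ℝ, 0 < c₇ ∧ 0 < c₈ ∧ 0 < ε₀ ∧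
      ∀ ε : ℝ, 0 < ε → ε < ε₀ →
        ∀ X Y X' Y' : ℝ → ℝ,
          (∀ t : ℝ, 0 ≤ t → 0 ≤ X t) → (∀ t : ℝ, 0 ≤ t → 0 ≤ Y t) →
          (∀ t : ℝ, 0 ≤ t → HasDerivAt X (X' t) t) →
          (∀ t : ℝ, 0 ≤ t → HasDerivAt Y (Y' t) t) →
          (∀ t : ℝ, 0 ≤ t →
            X' t ≤ -c₁ * Real.sqrt ε * X t + c₂ / Real.sqrt ε * Y t + c₃) →
          (∀ t : ℝ, 0 ≤ t →
            Y' t ≤ c₄ * ε * Real.sqrt ε * X t - c₅ * Y t + c₆ * ε ^ 2) →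
          X 0 ≤ C₀ → Y 0 ≤ C₀ * ε ^ 2 →
          ∀ t : ℝ, 0 ≤ t → X t ≤ c₇ / Real.sqrt ε ∧ Y t ≤ c₈ * ε := by
  obtain ⟨A, hA_def⟩ : ∃ A, A = (c₃ + 1) / c₁ + C₀ := ⟨_, rfl⟩
  obtain ⟨B, hB_def⟩ : ∃ B, B = (c₄ * A + c₆) / c₅ + C₀ := ⟨_, rfl⟩
  have hC₀A : C₀ ≤ A := hA_def ▸ le_add_of_nonneg_left (by positivity)
  have hA₀ : 0 < A := hC₀.trans_le hC₀A
  have hC₀B : C₀ ≤ B := hB_def ▸ le_add_of_nonneg_left (by positivity)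
  have hA : c₃ + 1 ≤ c₁ * A := by
    rw [hA_def, mul_add, mul_div_cancel₀ _ h₁.ne']
    nlinarith
  have hB : c₄ * A + c₆ < c₅ * B := by
    rw [hB_def, mul_add, mul_div_cancel₀ _ h₅.ne']
    nlinarith
  have hB₀ : 0 < B := hC₀.trans_le hC₀B
  refine ⟨A, B, (min 1 (c₂ * B)⁻¹) ^ 2, hA₀, hB₀, by positivity, ?_⟩
  intro ε hε hε₀ X Y X' Y' _ _ hX hY hX' hY' hX₀ hY₀
  obtain ⟨s, hs, rfl⟩ : ∃ s, 0 < s ∧ ε = s ^ 2 := ⟨√ε, sqrt_pos.2 hε, (sq_sqrt hε.le).symm⟩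
  simp only [sqrt_sq hs.le] at hX' hY' ⊢
  obtain ⟨hs₁, hsB⟩ := lt_min_iff.mp <|
    (pow_lt_pow_iff_left₀ hs.le (by positivity) two_ne_zero).mp hε₀
  refine le_div_and_le_mul_sq_of_diffIneq h₂.le h₄.le h₆.le hs hs₁.le hA hB
    ((lt_inv_mul_iff₀ (by positivity)).mp (by simpa using hsB)) hX hY hX' hY'
    (hX₀.trans (hC₀A.trans (le_div_self hA₀.le hs hs₁.le))) ?_
  calc Y 0 ≤ C₀ * (s ^ 2) ^ 2 := hY₀
    _ ≤ B * s ^ 2 := by gcongr; nlinarith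
end
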